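/- Let (f,M) be a polymatroid and A = {a_1,…,a_k} ⊆ M. Then f↓A = f↓a_1↓⋯↓a_k is a polymatroid that is tight at every element of A; moreover f is tight on A (that is, f = f↓A) if and only if f is tight at every element of A. -/

import Mathlib

/-!
Tightening at `a` subtracts the constant `f(a|M∖{a})` times the rank `r_{a}`. Since `r_{a}` is
modular, submodularity survives; since, by submodularity, `f(a|M∖{a})` is the smallest marginal
value `f(a|B∖{a})` of `a`, so does monotonicity. Tightening at `b ≠ a` does not change
`f(a|M∖{a})`, tightening at `a` makes it `0`, and tightening at `a` is the identity once it is `0`.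
-/

open Finset

noncomputable section

variable {α : Type*} [DecidableEq α]

/-- `f` is a polymatroid with ground set `M`: it vanishes on `∅` and is
non-negative, monotone and submodular on subsets of `M`. -/
def IsPolymatroid (M : Finset α) (f : Finset α → ℝ) : Prop :=
  f ∅ = 0 ∧
  (∀ A, A ⊆ M → 0 ≤ f A) ∧
  (∀ A B, A ⊆ B → B ⊆ M → f A ≤ f B) ∧
  (∀ A B, A ⊆ M → B ⊆ M → f (A ∪ B) + f (A ∩ B) ≤ f A + f B)

/-- `pmi f I J K` is the expression `f(I,J|K) = f(I∪K)+f(J∪K)−f(I∪J∪K)−f(K)`. -/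
def pmi (f : Finset α → ℝ) (I J K : Finset α) : ℝ :=
  f (I ∪ K) + f (J ∪ K) - f (I ∪ J ∪ K) - f K

/-- `pcd f I K` is the expression `f(I|K) = f(I∪K) − f(K)`. -/
def pcd (f : Finset α → ℝ) (I K : Finset α) : ℝ := f (I ∪ K) - f K

/-- `runit A` is the rank function `r_A`: `r_A(I) = 1` if `A ∩ I ≠ ∅`, else `0`. -/
def runit (A I : Finset α) : ℝ := if (A ∩ I).Nonempty then 1 else 0

/-- Tightening of `f` at `a` (relative to ground set `M`):
`f↓a = f − f(a|M∖{a})·r_{{a}}`. -/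
def tightenAt (M : Finset α) (f : Finset α → ℝ) (a : α) : Finset α → ℝ :=
  fun I => f I - pcd f {a} (M \ {a}) * runit {a} I

lemma runit_singleton (a : α) (I : Finset α) : runit {a} I = if a ∈ I then 1 else 0 := by
  unfold runit
  by_cases h : a ∈ I
  · simp [singleton_inter_of_mem h, h]
  · simp [singleton_inter_of_notMem h, h]

lemma runit_union_add_runit_inter (a : α) (I J : Finset α) :
    runit {a} (I ∪ J) + runit {a} (I ∩ J) = runit {a} I + runit {a} J := by
  simp only [runit_singleton, mem_union, mem_inter]
  by_cases hI : a ∈ I <;> by_cases hJ : a ∈ J <;> simp [hI, hJ]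

lemma pcd_singleton_sdiff {f : Finset α → ℝ} {a : α} {B : Finset α} (ha : a ∈ B) :
    pcd f {a} (B \ {a}) = f B - f (B \ {a}) := by
  rw [pcd, union_sdiff_of_subset (singleton_subset_iff.mpr ha)]

lemma IsPolymatroid.pcd_le_pcd_of_subset {M : Finset α} {f : Finset α → ℝ} (hf : IsPolymatroid M f)
    {I K L : Finset α} (hKL : K ⊆ L) (hIL : I ∪ L ⊆ M) : pcd f I L ≤ pcd f I K := by
  obtain ⟨-, -, hmono, hsub⟩ := hf
  have hL : L ⊆ M := subset_union_right.trans hIL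
  have hIK : I ∪ K ⊆ M := union_subset_union_right hKL |>.trans hIL
  have hunion : I ∪ K ∪ L = I ∪ L := by
    rw [union_assoc, union_eq_right.mpr hKL]
  have hK : K ⊆ (I ∪ K) ∩ L := subset_inter subset_union_right hKL
  have h₁ := hsub (I ∪ K) L hIK hL
  have h₂ := hmono K ((I ∪ K) ∩ L) hK (inter_subset_right.trans hL)
  rw [hunion] at h₁
  unfold pcd
  linarith

lemma IsPolymatroid.sub_mul_runit {M : Finset α} {f : Finset α → ℝ} (hf : IsPolymatroid M f)
    {a : α} {c : ℝ} (hc : ∀ B ⊆ M, a ∈ B → c ≤ pcd f {a} (B \ {a})) :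
    IsPolymatroid M (fun I => f I - c * runit {a} I) := by
  obtain ⟨h0, -, hmono, hsub⟩ := hf
  have hzero : f ∅ - c * runit {a} ∅ = 0 := by simp [h0, runit]
  have hmono' : ∀ A B, A ⊆ B → B ⊆ M →
      f A - c * runit {a} A ≤ f B - c * runit {a} B := by
    intro A B hAB hB
    simp only [runit_singleton]
    by_cases haA : a ∈ A
    · simp only [haA, hAB haA, if_true]
      linarith [hmono A B hAB hB]
    by_cases haB : a ∈ B
    · have hA : A ⊆ B \ {a} := fun x hx =>
        mem_sdiff.mpr ⟨hAB hx, fun hxa => haA (mem_singleton.mp hxa ▸ hx)⟩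
      have hcB := hc B hB haB
      rw [pcd_singleton_sdiff haB] at hcB
      simp only [haA, haB, if_true, if_false]
      linarith [hmono A (B \ {a}) hA (sdiff_subset.trans hB)]
    · simp only [haA, haB, if_false]
      linarith [hmono A B hAB hB]
  refine ⟨hzero, fun A hA => ?_, hmono', fun A B hA hB => ?_⟩
  · simpa [hzero] using hmono' ∅ A (empty_subset A) hA
  · linear_combination hsub A B hA hB - c * runit_union_add_runit_inter a A B

lemma isPolymatroid_tightenAt {M : Finset α} {f : Finset α → ℝ} (hf : IsPolymatroid M f)
    (a : α) : IsPolymatroid M (tightenAt M f a) :=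
  hf.sub_mul_runit fun _ hB haB =>
    hf.pcd_le_pcd_of_subset (sdiff_subset_sdiff hB subset_rfl)
      (union_subset (singleton_subset_iff.mpr (hB haB)) sdiff_subset)

lemma pcd_tightenAt_self (M : Finset α) (f : Finset α → ℝ) (a : α) :
    pcd (tightenAt M f a) {a} (M \ {a}) = 0 := by
  simp [pcd, tightenAt, runit_singleton]

lemma pcd_tightenAt_of_ne (M : Finset α) (f : Finset α → ℝ) {a b : α} (hab : a ≠ b) :
    pcd (tightenAt M f b) {a} (M \ {a}) = pcd f {a} (M \ {a}) := by
  have hb : b ∈ {a} ∪ M \ {a} ↔ b ∈ M \ {a} := by simp [hab.symm]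
  simp only [pcd, tightenAt, runit_singleton, hb]
  ring

lemma tightenAt_eq_self {M : Finset α} {f : Finset α → ℝ} {a : α}
    (h : pcd f {a} (M \ {a}) = 0) : tightenAt M f a = f := by
  funext I
  simp [tightenAt, h]

lemma isPolymatroid_foldl_tightenAt {M : Finset α} {f : Finset α → ℝ} (hf : IsPolymatroid M f)
    (l : List α) : IsPolymatroid M (l.foldl (tightenAt M) f) := by
  induction l generalizing f with
  | nil => exact hf
  | cons b t ih => exact ih (isPolymatroid_tightenAt hf b)

lemma pcd_foldl_tightenAt_of_notMem (M : Finset α) (f : Finset α → ℝ) {a : α} {l : List α}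
    (ha : a ∉ l) : pcd (l.foldl (tightenAt M) f) {a} (M \ {a}) = pcd f {a} (M \ {a}) := by
  induction l generalizing f with
  | nil => rfl
  | cons b t ih =>
    rw [List.mem_cons, not_or] at ha
    rw [List.foldl_cons, ih _ ha.2, pcd_tightenAt_of_ne M f ha.1]

lemma pcd_foldl_tightenAt_of_mem (M : Finset α) (f : Finset α → ℝ) {a : α} {l : List α}
    (ha : a ∈ l) : pcd (l.foldl (tightenAt M) f) {a} (M \ {a}) = 0 := by
  induction l generalizing f with
  | nil => simp at ha
  | cons b t ih =>
    rw [List.foldl_cons]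
    by_cases hat : a ∈ t
    · exact ih _ hat
    · obtain rfl : a = b := by simpa [hat] using ha
      rw [pcd_foldl_tightenAt_of_notMem M _ hat, pcd_tightenAt_self]

lemma foldl_tightenAt_eq_self {M : Finset α} {f : Finset α → ℝ} {l : List α}
    (h : ∀ a ∈ l, pcd f {a} (M \ {a}) = 0) : l.foldl (tightenAt M) f = f := by
  induction l with
  | nil => rfl
  | cons b t ih =>
    rw [List.foldl_cons, tightenAt_eq_self (h b List.mem_cons_self)]
    exact ih fun a ha => h a (List.mem_cons_of_mem b ha)

theorem statement_2_general (M : Finset α) (f : Finset α → ℝ) (hf : IsPolymatroid M f)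
    (l : List α) :
    IsPolymatroid M (l.foldl (tightenAt M) f) ∧
    (∀ a ∈ l, pcd (l.foldl (tightenAt M) f) {a} (M \ {a}) = 0) ∧
    (f = l.foldl (tightenAt M) f ↔ ∀ a ∈ l, pcd f {a} (M \ {a}) = 0) := by
  have htight : ∀ a ∈ l, pcd (l.foldl (tightenAt M) f) {a} (M \ {a}) = 0 :=
    fun _ ha => pcd_foldl_tightenAt_of_mem M f ha
  refine ⟨isPolymatroid_foldl_tightenAt hf l, htight, ⟨fun hfl => ?_, fun h => ?_⟩⟩
  · rw [hfl]
    exact htight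
  · exact (foldl_tightenAt_eq_self h).symm

/-- for `A = {a_1,…,a_k} ⊆ M` (given as a duplicate-free list),
`f↓A = f↓a_1↓⋯↓a_k` is a polymatroid tight at every element of `A`, and
`f = f↓A` iff `f` is tight at every element of `A`. -/
theorem statement_2 (M : Finset α) (f : Finset α → ℝ) (hf : IsPolymatroid M f)
    (l : List α) (hnd : l.Nodup) (hl : ∀ a ∈ l, a ∈ M) :
    IsPolymatroid M (l.foldl (tightenAt M) f) ∧
    (∀ a ∈ l, pcd (l.foldl (tightenAt M) f) {a} (M \ {a}) = 0) ∧
    (f = l.foldl (tightenAt M) f ↔ ∀ a ∈ l, pcd f {a} (M \ {a}) = 0) :=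
  statement_2_general M f hf l
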